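/- arXiv:1907.07633 — 3 statements merged into one kernel-verified Lean document; each statement's English description precedes it below -/
import Mathlib

section
/- Let G be a finite group and let g ∈ G. The number of ordered pairs (x, y) ∈ G × G with [x,y] = g equals |G| times the sum over all irreducible complex characters χ of G of χ(g)/χ(1). -/
open CategoryTheory

/-- `f : G → ℂ` is an irreducible complex character of `G`: it is the character of some
irreducible (simple) finite-dimensional complex representation of `G`. -/
def IsIrrChar (G : Type) [Group G] (f : G → ℂ) : Prop :=
  ∃ V : FDRep ℂ G, Simple V ∧ f = V.character

/-- Two groups are equitabular if there are bijections between their irreducible complex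
characters and between their conjugacy classes such that corresponding characters agree on
representatives of corresponding conjugacy classes. -/
def Equitabular (G H : Type) [Group G] [Group H] : Prop :=
  ∃ (Φ : {f : G → ℂ // IsIrrChar G f} ≃ {f : H → ℂ // IsIrrChar H f})
    (Ψ : ConjClasses G ≃ ConjClasses H),
    ∀ (χ : {f : G → ℂ // IsIrrChar G f}) (C : ConjClasses G) (g : G) (h : H),
      g ∈ C.carrier → h ∈ (Ψ C).carrier → χ.val g = (Φ χ).val h

namespace FrobeniusCommutatorAux

open CategoryTheory Module FDRep
open scoped Classical

set_option linter.unusedSectionVars false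

variable {G : Type} [Group G] [Fintype G]

instance : Fintype (GrpCat.of G) := ‹Fintype G›

lemma cardC_ne_zero : (Fintype.card G : ℂ) ≠ 0 := by
  exact_mod_cast Fintype.card_ne_zero

noncomputable instance : Invertible (Fintype.card G : ℂ) :=
  invertibleOfNonzero cardC_ne_zero

/-- Orthogonality, un-averaged. -/
lemma orth (V W : FDRep ℂ G) [Simple V] [Simple W] :
    ∑ g : G, V.character g * W.character g⁻¹ =
      if Nonempty (V ≅ W) then (Fintype.card G : ℂ) else 0 := by
  haveI : Invertible (Nat.card G : ℂ) :=
    invertibleOfNonzero (by rw [Nat.card_eq_fintype_card]; exact cardC_ne_zero)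
  have h : (Nat.card G : ℂ)⁻¹ * ∑ g : G, V.character g * W.character g⁻¹ =
      if Nonempty (V ≅ W) then (1 : ℂ) else 0 :=
    FDRep.char_orthonormal (k := ℂ) V W
  rw [Nat.card_eq_fintype_card, inv_mul_eq_iff_eq_mul₀ cardC_ne_zero] at h
  rw [h]
  by_cases hn : Nonempty (V ≅ W) <;> simp [hn]

lemma char_one_ne_zero (V : FDRep ℂ G) [Simple V] : V.character 1 ≠ 0 := by
  rw [FDRep.char_one]
  have : finrank ℂ V ≠ 0 := by
    intro h0
    have hss : Subsingleton V := (Module.finrank_zero_iff (R := ℂ) (M := V)).mp h0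
    have hid : (𝟙 V : V ⟶ V) = 0 := by
      apply Action.Hom.ext
      ext v
      exact @Subsingleton.elim _ hss _ _
    exact CategoryTheory.id_nonzero V hid
  exact_mod_cast this

lemma trace_comp_of_comm (V : FDRep ℂ G) [Simple V] (T : V →ₗ[ℂ] V)
    (hT : ∀ g : G, ∀ v : V, T (V.ρ g v) = V.ρ g (T v)) (b : G) :
    LinearMap.trace ℂ V (T ∘ₗ V.ρ b) =
      LinearMap.trace ℂ V T * V.character b / V.character 1 := by
  let Θ : V ⟶ V := ⟨FGModuleCat.ofHom T, fun g => by ext v; exact hT g v⟩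
  obtain ⟨c, hc⟩ := CategoryTheory.endomorphism_simple_eq_smul_id ℂ Θ
  have hThom : T = c • LinearMap.id := (congrArg (fun φ => φ.hom.hom.hom) hc).symm
  have htr : LinearMap.trace ℂ V T = c * V.character 1 := by
    rw [hThom, map_smul, LinearMap.trace_id, FDRep.char_one, smul_eq_mul]
  have hTb : T ∘ₗ (V.ρ b : V →ₗ[ℂ] V) = c • (V.ρ b : V →ₗ[ℂ] V) := by
    rw [hThom]; ext v; simp
  rw [hTb, map_smul, htr]
  have hb : LinearMap.trace ℂ V (V.ρ b) = V.character b := rfl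
  rw [hb, smul_eq_mul]
  have h1 := char_one_ne_zero V
  have h1' : (finrank ℂ V : ℂ) ≠ 0 := by rwa [FDRep.char_one] at h1
  field_simp

omit [Fintype G] in
@[simp] lemma char_def (V : FDRep ℂ G) (u : G) :
    LinearMap.trace ℂ V (V.ρ u) = V.character u := rfl

omit [Fintype G] in
lemma rho_mul_apply (V : FDRep ℂ G) (u w : G) (v : V) :
    V.ρ (u * w) v = V.ρ u (V.ρ w v) := by
  rw [map_mul]; exact rfl

omit [Fintype G] in
lemma char_conj' (V : FDRep ℂ G) (a y : G) :
    V.character (y⁻¹ * a * y) = V.character a := by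
  have := V.char_conj (k := ℂ) a y⁻¹
  rwa [inv_inv] at this

lemma sum_conj_char (V : FDRep ℂ G) [Simple V] (a b : G) :
    ∑ y : G, V.character (y⁻¹ * a * y * b) =
      (Fintype.card G : ℂ) * V.character a * V.character b / V.character 1 := by
  set T : V →ₗ[ℂ] V := ∑ y : G, (V.ρ (y⁻¹ * a * y) : V →ₗ[ℂ] V) with hTdef
  have hT : ∀ h : G, ∀ v : V, T (V.ρ h v) = V.ρ h (T v) := by
    intro h v
    simp only [hTdef, LinearMap.sum_apply, map_sum]
    refine (Fintype.sum_equiv (Equiv.mulRight h⁻¹) _ _ ?_).symm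
    intro y
    rw [Equiv.coe_mulRight, ← rho_mul_apply, ← rho_mul_apply]
    congr 1
    group
  have htrT : LinearMap.trace ℂ V T = (Fintype.card G : ℂ) * V.character a := by
    rw [hTdef, map_sum]
    simp only [char_def]
    rw [Finset.sum_congr rfl fun y _ => char_conj' V a y,
      Finset.sum_const, Finset.card_univ, nsmul_eq_mul]
  have hcomp : T ∘ₗ (V.ρ b : V →ₗ[ℂ] V) = ∑ y : G, (V.ρ (y⁻¹ * a * y * b) : V →ₗ[ℂ] V) := by
    ext v
    simp only [LinearMap.comp_apply, hTdef, LinearMap.sum_apply, rho_mul_apply]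
  have key := trace_comp_of_comm V T hT b
  rw [hcomp, map_sum] at key
  simp only [char_def] at key
  rw [key, htrT]
lemma sum_conv_char (V : FDRep ℂ G) [Simple V] (b : G) :
    ∑ x : G, V.character x * V.character (x⁻¹ * b) =
      (Fintype.card G : ℂ) * V.character b / V.character 1 := by
  set P : V →ₗ[ℂ] V := ∑ x : G, V.character x • (V.ρ x⁻¹ : V →ₗ[ℂ] V) with hPdef
  have hP : ∀ h : G, ∀ v : V, P (V.ρ h v) = V.ρ h (P v) := by
    intro h v
    simp only [hPdef, LinearMap.sum_apply, map_sum, LinearMap.smul_apply, map_smul]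
    refine Fintype.sum_equiv ((Equiv.mulLeft h⁻¹).trans (Equiv.mulRight h)) _ _ ?_
    intro x
    have hx : ((Equiv.mulLeft h⁻¹).trans (Equiv.mulRight h)) x = h⁻¹ * x * h := by
      simp [mul_assoc]
    rw [hx, char_conj' V x h]
    rw [← rho_mul_apply, ← rho_mul_apply]
    congr 2
    group
  have htrP : LinearMap.trace ℂ V P = (Fintype.card G : ℂ) := by
    rw [hPdef, map_sum]
    have : ∀ x : G, LinearMap.trace ℂ V (V.character x • (V.ρ x⁻¹ : V →ₗ[ℂ] V)) =
        V.character x * V.character x⁻¹ := by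
      intro x; rw [map_smul, smul_eq_mul, char_def]
    rw [Finset.sum_congr rfl fun x _ => this x, orth V V]
    simp
  have hcomp : P ∘ₗ (V.ρ b : V →ₗ[ℂ] V) =
      ∑ x : G, V.character x • (V.ρ (x⁻¹ * b) : V →ₗ[ℂ] V) := by
    ext v
    simp only [LinearMap.comp_apply, hPdef, LinearMap.sum_apply, LinearMap.smul_apply,
      rho_mul_apply]
  have key := trace_comp_of_comm V P hP b
  rw [hcomp, map_sum] at key
  rw [htrP] at key
  rw [← key]
  refine Finset.sum_congr rfl fun x _ => ?_
  rw [map_smul, smul_eq_mul, char_def]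

lemma pair_orth {f₁ f₂ : G → ℂ} (h₁ : IsIrrChar G f₁) (h₂ : IsIrrChar G f₂) :
    ∑ g : G, f₁ g * f₂ g⁻¹ = if f₁ = f₂ then (Fintype.card G : ℂ) else 0 := by
  obtain ⟨V₁, hs₁, rfl⟩ := h₁
  obtain ⟨V₂, hs₂, rfl⟩ := h₂
  haveI := hs₁; haveI := hs₂
  by_cases hn : Nonempty (V₁ ≅ V₂)
  · have hchar : V₁.character = V₂.character := FDRep.char_iso hn.some
    rw [orth V₁ V₂, if_pos hn, if_pos hchar]
  · rw [orth V₁ V₂, if_neg hn, if_neg ?_]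
    intro hchar
    have hA := orth V₁ V₂
    rw [if_neg hn, hchar] at hA
    have hB := orth V₂ V₂
    rw [if_pos ⟨Iso.refl _⟩] at hB
    exact cardC_ne_zero (G := G) (by rw [← hB, hA])

lemma irr_linearIndependent :
    LinearIndependent ℂ (fun f : {f : G → ℂ // IsIrrChar G f} => (f : G → ℂ)) := by
  rw [linearIndependent_iff']
  intro s c hsum i hi
  have key : ∑ g : G, (∑ j ∈ s, c j • (j : G → ℂ)) g * (i : G → ℂ) g⁻¹ = 0 := by
    rw [show (∑ j ∈ s, c j • (j : G → ℂ)) = 0 from hsum]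
    simp
  have expand : ∑ g : G, (∑ j ∈ s, c j • (j : G → ℂ)) g * (i : G → ℂ) g⁻¹ =
      ∑ j ∈ s, c j * ∑ g : G, (j : G → ℂ) g * (i : G → ℂ) g⁻¹ := by
    simp only [Finset.sum_apply, Pi.smul_apply, smul_eq_mul, Finset.sum_mul, Finset.mul_sum]
    rw [Finset.sum_comm]
    exact Finset.sum_congr rfl fun j _ => Finset.sum_congr rfl fun g _ => by ring
  rw [expand] at key
  have eval : ∀ j ∈ s, c j * (∑ g : G, (j : G → ℂ) g * (i : G → ℂ) g⁻¹) =
      if j = i then c j * (Fintype.card G : ℂ) else 0 := by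
    intro j _
    rw [pair_orth j.2 i.2]
    by_cases hji : (j : G → ℂ) = (i : G → ℂ)
    · rw [if_pos hji, if_pos (Subtype.ext hji)]
    · rw [if_neg hji, if_neg (fun h => hji (congrArg Subtype.val h)), mul_zero]
  rw [Finset.sum_congr rfl eval, Finset.sum_ite_eq' s i (fun j => c j * _), if_pos hi] at key
  rcases mul_eq_zero.mp key with h | h
  · exact h
  · exact absurd h (cardC_ne_zero (G := G))

lemma irr_finite : Finite {f : G → ℂ // IsIrrChar G f} :=
  irr_linearIndependent.finite_of_isNoetherian

noncomputable instance : Fintype {f : G → ℂ // IsIrrChar G f} :=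
  @Fintype.ofFinite _ irr_finite

/-- The subrepresentation on an invariant subspace. -/
noncomputable def subrep (V : FDRep ℂ G) (p : Submodule ℂ V)
    (hp : ∀ (g : G) (v : V), v ∈ p → V.ρ g v ∈ p) : FDRep ℂ G :=
  FDRep.of (G := G)
    { toFun := fun g => (V.ρ g).restrict (fun v hv => hp g v hv)
      map_one' := by
        ext v
        simp [LinearMap.restrict_apply]
      map_mul' := by
        intro g h
        ext v
        simp [LinearMap.restrict_apply, rho_mul_apply] }

noncomputable def subrepHom (V : FDRep ℂ G) (p : Submodule ℂ V)
    (hp : ∀ (g : G) (v : V), v ∈ p → V.ρ g v ∈ p) : subrep V p hp ⟶ V where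
  hom := FGModuleCat.ofHom p.subtype
  comm := fun g => by
    ext v
    exact rfl

lemma hom_comm_apply {X Y : FDRep ℂ G} (f : X ⟶ Y) (g : G) (v : X) :
    f.hom (X.ρ g v) = Y.ρ g (f.hom v) :=
  congrArg (fun φ => φ.hom.hom v) (f.comm g)

lemma simple_of_no_invariant (V : FDRep ℂ G) (hnt : ∃ v : V, v ≠ 0)
    (hinv : ∀ p : Submodule ℂ V, (∀ (g : G) (v : V), v ∈ p → V.ρ g v ∈ p) → p = ⊥ ∨ p = ⊤) :
    Simple V := by
  constructor
  intro Y f hmono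
  constructor
  · intro hiso h0
    obtain ⟨v, hv⟩ := hnt
    have hf0 : f.hom = 0 := by rw [h0, Action.zero_hom]
    have h2 : (inv f).hom ≫ f.hom = 𝟙 V.V := by
      rw [← Action.comp_hom, IsIso.inv_hom_id, Action.id_hom]
    have h3 : f.hom ((inv f).hom v) = v := congrArg (fun φ => φ.hom.hom v) h2
    rw [hf0] at h3
    exact hv (by rw [← h3]; rfl)
  · intro hne
    -- injectivity
    have hK : ∀ (g : G) (v : Y), v ∈ LinearMap.ker f.hom.hom.hom → Y.ρ g v ∈ LinearMap.ker f.hom.hom.hom := by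
      intro g v hv
      rw [LinearMap.mem_ker] at hv ⊢
      exact (hom_comm_apply f g v).trans ((congrArg (V.ρ g) hv).trans (map_zero _))
    have hι : subrepHom Y _ hK ≫ f = 0 := by
      apply Action.Hom.ext
      ext v
      exact v.2
    have hι0 : subrepHom Y _ hK = (0 : subrep Y _ hK ⟶ Y) :=
      (cancel_mono f).mp (by rw [hι, Limits.zero_comp])
    have hinj : Function.Injective f.hom.hom.hom := by
      rw [← LinearMap.ker_eq_bot]
      rw [Submodule.eq_bot_iff]
      intro v hv
      have : (subrepHom Y _ hK).hom ⟨v, hv⟩ = v := rfl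
      rw [← this, hι0]
      rfl
    -- surjectivity
    have hR : ∀ (g : G) (v : V), v ∈ LinearMap.range f.hom.hom.hom → V.ρ g v ∈ LinearMap.range f.hom.hom.hom := by
      intro g v hv
      obtain ⟨y, rfl⟩ := hv
      exact ⟨Y.ρ g y, hom_comm_apply f g y⟩
    have hsurj : Function.Surjective f.hom.hom.hom := by
      rcases hinv _ hR with h | h
      · exfalso
        apply hne
        apply Action.Hom.ext
        ext v
        exact LinearMap.congr_fun (LinearMap.range_eq_bot.mp h) v
      · rw [← LinearMap.range_eq_top]
        exact h
    set e := LinearEquiv.ofBijective f.hom.hom.hom ⟨hinj, hsurj⟩ with hedef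
    have hg : ∀ (g : G) (v : V), e.symm (V.ρ g v) = Y.ρ g (e.symm v) := by
      intro g v
      apply hinj
      show f.hom _ = f.hom _
      have h1 : f.hom (e.symm (V.ρ g v)) = V.ρ g v := e.apply_symm_apply _
      have h2 : f.hom (e.symm v) = v := e.apply_symm_apply _
      rw [h1, hom_comm_apply, h2]
    refine ⟨⟨⟨FGModuleCat.ofHom e.symm.toLinearMap, fun g => by ext v; exact hg g v⟩, ?_, ?_⟩⟩
    · apply Action.Hom.ext
      ext y
      exact e.symm_apply_apply y
    · apply Action.Hom.ext
      ext v
      exact e.apply_symm_apply v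

noncomputable instance : Module.Finite ℂ (MonoidAlgebra ℂ G) :=
  Module.Finite.of_basis (MonoidAlgebra.basis G ℂ)

lemma exists_simple_decomp :
    ∃ (ι : Type) (_ : Fintype ι) (W : ι → FDRep ℂ G), (∀ i, Simple (W i)) ∧
      ∀ x : G, (if x = 1 then (Fintype.card G : ℂ) else 0) = ∑ i, (W i).character x := by
  haveI : NeZero (Fintype.card G : ℂ) :=
    ⟨by exact_mod_cast (Fintype.card_ne_zero : Fintype.card G ≠ 0)⟩
  set A := MonoidAlgebra ℂ G with hA
  obtain ⟨s, hindep, hstop, hsimple⟩ :=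
    IsSemisimpleModule.exists_sSupIndep_sSup_simples_eq_top A A
  have hiSupIndep : iSupIndep ((↑) : s → Submodule A A) := (sSupIndep_iff s).mp hindep
  -- finiteness of s
  haveI : IsNoetherian ℂ A := inferInstance
  haveI : IsNoetherian A A := isNoetherian_of_tower ℂ inferInstance
  have hfin : Finite s := by
    have h := WellFoundedGT.finite_ne_bot_of_iSupIndep hiSupIndep
    have : (Set.univ : Set s).Finite := by
      refine h.subset ?_
      intro i _
      have : IsSimpleModule A (i : Submodule A A) := hsimple i i.2
      exact (isSimpleModule_iff_isAtom.mp this).1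
    exact Set.finite_univ_iff.mp this
  haveI : Fintype s := @Fintype.ofFinite _ hfin
  -- internal direct sum over A
  have hIntA : DirectSum.IsInternal ((↑) : s → Submodule A A) := by
    rw [DirectSum.isInternal_submodule_iff_iSupIndep_and_iSup_eq_top]
    exact ⟨hiSupIndep, by rw [← sSup_eq_iSup']; exact hstop⟩
  -- transfer to ℂ
  set Nc : s → Submodule ℂ A := fun i => (i : Submodule A A).restrictScalars ℂ with hNc
  have hIntC : DirectSum.IsInternal Nc := by
    rw [DirectSum.isInternal_submodule_iff_iSupIndep_and_iSup_eq_top]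
    constructor
    · intro i
      rw [disjoint_iff_inf_le]
      intro x hx
      obtain ⟨hx1, hx2⟩ := hx
      have hx2' : x ∈ ⨆ (j : s) (_ : j ≠ i), (j : Submodule A A) := by
        have hle : (⨆ (j : s) (_ : j ≠ i), Nc j) ≤
            ((⨆ (j : s) (_ : j ≠ i), (j : Submodule A A)).restrictScalars ℂ) := by
          refine iSup₂_le fun j hj => ?_
          intro y hy
          rw [Submodule.restrictScalars_mem]
          exact Submodule.mem_iSup_of_mem j (Submodule.mem_iSup_of_mem hj hy)
        exact hle hx2
      have hdis := hiSupIndep i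
      rw [disjoint_iff_inf_le] at hdis
      exact hdis ⟨hx1, hx2'⟩
    · rw [eq_top_iff]
      intro x _
      have hx : x ∈ ⨆ (i : s), (i : Submodule A A) := by
        rw [← sSup_eq_iSup', hstop]; trivial
      refine Submodule.iSup_induction (motive := fun y => y ∈ ⨆ i, Nc i) _ hx ?_ ?_ ?_
      · intro i y hy
        exact Submodule.mem_iSup_of_mem i (by rw [hNc, Submodule.restrictScalars_mem]; exact hy)
      · exact Submodule.zero_mem _
      · intro a b ha hb
        exact Submodule.add_mem _ ha hb
  -- the action maps
  set L : G → (A →ₗ[ℂ] A) := fun x => LinearMap.mulLeft ℂ (MonoidAlgebra.single x 1) with hL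
  have hmaps : ∀ (x : G) (i : s), Set.MapsTo (L x) (Nc i) (Nc i) := by
    intro x i m hm
    have hmem : m ∈ (i : Submodule A A) := hm
    have : (MonoidAlgebra.single x (1:ℂ)) * m ∈ (i : Submodule A A) := by
      have := (i : Submodule A A).smul_mem (MonoidAlgebra.single x 1) hmem
      rwa [smul_eq_mul] at this
    exact this
  -- trace of left multiplication
  have htrace : ∀ x : G, LinearMap.trace ℂ A (L x) =
      if x = 1 then (Fintype.card G : ℂ) else 0 := by
    intro x
    let b : Basis G ℂ A := MonoidAlgebra.basis G ℂ
    rw [LinearMap.trace_eq_matrix_trace ℂ b]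
    have hdiag : ∀ g : G, (LinearMap.toMatrix b b (L x)) g g =
        if x = 1 then (1:ℂ) else 0 := by
      intro g
      rw [LinearMap.toMatrix_apply]
      have hbg : b g = MonoidAlgebra.single g 1 := by
        simp [b, Finsupp.coe_basisSingleOne]
        rfl
      rw [hbg]
      have h1 : L x (MonoidAlgebra.single g 1) = MonoidAlgebra.single (x*g) 1 := by
        rw [hL]
        simp only [LinearMap.mulLeft_apply]
        rw [MonoidAlgebra.single_mul_single, one_mul]
      rw [h1]
      have h2 : (b.repr (MonoidAlgebra.single (x*g) 1)) g =
          (Finsupp.single (x*g) (1:ℂ)) g := by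
        simp only [b, Finsupp.basisSingleOne_repr, LinearEquiv.refl_apply]
        rfl
      rw [h2, Finsupp.single_apply]
      by_cases hx : x = 1
      · rw [if_pos (by rw [hx, one_mul]), if_pos hx]
      · rw [if_neg (by rw [mul_eq_right]; exact hx), if_neg hx]
    rw [Matrix.trace]
    simp only [Matrix.diag_apply]
    rw [Finset.sum_congr rfl fun g _ => hdiag g, Finset.sum_const, Finset.card_univ]
    by_cases hx : x = 1 <;> simp [hx]
  -- the representations on the simple summands
  let ρfun : (i : s) → Representation ℂ G (Nc i) := fun i =>
    { toFun := fun x => (L x).restrict (hmaps x i)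
      map_one' := by
        refine LinearMap.ext fun v => Subtype.ext ?_
        show (L 1) (v : A) = (v : A)
        rw [hL]
        simp only [LinearMap.mulLeft_apply]
        rw [show (MonoidAlgebra.single (1 : G) (1:ℂ)) = (1 : A) from rfl, one_mul]
      map_mul' := by
        intro x y
        refine LinearMap.ext fun v => Subtype.ext ?_
        show (L (x * y)) (v : A) = (L x) ((L y) (v : A))
        rw [hL]
        simp only [LinearMap.mulLeft_apply]
        rw [← mul_assoc, MonoidAlgebra.single_mul_single, one_mul] }
  refine ⟨s, inferInstance, fun i => FDRep.of (ρfun i), ?_, ?_⟩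
  · intro i
    haveI hsm : IsSimpleModule A (i : Submodule A A) := hsimple i i.2
    apply simple_of_no_invariant
    · haveI h1 : Nontrivial (i : Submodule A A) := IsSimpleModule.nontrivial A _
      exact @exists_ne _ h1 0
    · intro p hp
      let q : Submodule A (i : Submodule A A) :=
        { carrier := {v | v ∈ p}
          zero_mem' := p.zero_mem
          add_mem' := fun ha hb => p.add_mem ha hb
          smul_mem' := by
            intro a m hm
            refine MonoidAlgebra.induction_on a
              (motive := fun a => ∀ m : (i : Submodule A A), m ∈ p → a • m ∈ p) ?_ ?_ ?_ m hm
            · intro g m hm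
              have key : (MonoidAlgebra.of ℂ G g) • m = (FDRep.of (ρfun i)).ρ g m := by
                apply Subtype.ext
                show (MonoidAlgebra.of ℂ G g) • (m : A) = (L g) (m : A)
                rw [hL]
                simp only [LinearMap.mulLeft_apply]
                rw [smul_eq_mul]
                rfl
              rw [key]
              exact hp g m hm
            · intro f g hf hg m hm
              rw [add_smul]
              exact p.add_mem (hf m hm) (hg m hm)
            · intro r f hf m hm
              rw [smul_assoc]
              exact p.smul_mem r (hf m hm) }
      rcases eq_bot_or_eq_top q with hq | hq
      · left
        rw [Submodule.eq_bot_iff]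
        intro v hv
        have : v ∈ q := hv
        rw [hq] at this
        exact this
      · right
        rw [Submodule.eq_top_iff']
        intro v
        have : v ∈ q := by rw [hq]; trivial
        exact this
  · intro x
    rw [← htrace x]
    haveI : ∀ i : s, Module.Finite ℂ (Nc i) := fun i => inferInstance
    haveI : ∀ i : s, Module.Free ℂ (Nc i) := fun i => inferInstance
    rw [LinearMap.trace_eq_sum_trace_restrict hIntC (fun i => hmaps x i)]
    rfl

/-- The regular character identity: `n·[h=1] = ∑_χ χ(1)χ(h)` over irreducible characters. -/
lemma reg_char_eq (h : G) :
    (if h = 1 then (Fintype.card G : ℂ) else 0) =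
      ∑ f : {f : G → ℂ // IsIrrChar G f}, f.val 1 * f.val h := by
  obtain ⟨ι, hι, W, hW, hreg⟩ := exists_simple_decomp (G := G)
  letI := hι
  set n : ℂ := (Fintype.card G : ℂ) with hn
  set S := {f : G → ℂ // IsIrrChar G f}
  let φ : ι → S := fun i => ⟨(W i).character, ⟨W i, hW i, rfl⟩⟩
  -- fiber count
  have hfiber : ∀ f : S, ((Finset.univ.filter (fun i => φ i = f)).card : ℂ) = f.val 1 := by
    intro f
    have hTa : ∑ x : G, (if x = 1 then n else 0) * f.val x⁻¹ = n * f.val 1 := by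
      have hstep : ∀ x : G, (if x = 1 then n else 0) * f.val x⁻¹ =
          (if x = 1 then n * f.val 1 else 0) := by
        intro x
        by_cases hx : x = 1
        · rw [if_pos hx, if_pos hx, hx, inv_one]
        · rw [if_neg hx, if_neg hx, zero_mul]
      rw [Finset.sum_congr rfl fun x _ => hstep x,
        Finset.sum_ite_eq' Finset.univ (1 : G) (fun _ => n * f.val 1),
        if_pos (Finset.mem_univ _)]
    have hTb : ∑ x : G, (if x = 1 then n else 0) * f.val x⁻¹ =
        ((Finset.univ.filter (fun i => φ i = f)).card : ℂ) * n := by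
      rw [Finset.sum_congr rfl (fun x _ => by rw [hreg x, Finset.sum_mul])]
      rw [Finset.sum_comm]
      have hterm : ∀ i : ι, ∑ x : G, (W i).character x * f.val x⁻¹ =
          if φ i = f then n else 0 := by
        intro i
        rw [pair_orth (φ i).2 f.2]
        by_cases hf : (W i).character = f.val
        · rw [if_pos hf, if_pos (Subtype.ext hf)]
        · rw [if_neg hf, if_neg (fun hc => hf (congrArg Subtype.val hc))]
      rw [Finset.sum_congr rfl fun i _ => hterm i]
      rw [← Finset.sum_filter, Finset.sum_const, nsmul_eq_mul]
    have h2 := hTa.symm.trans hTb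
    rw [mul_comm] at h2
    exact (mul_right_cancel₀ (cardC_ne_zero (G := G)) h2).symm
  -- fiberwise summation
  calc (if h = 1 then n else 0) = ∑ i : ι, (W i).character h := hreg h
    _ = ∑ i : ι, (φ i).val h := rfl
    _ = ∑ f : S, ∑ i ∈ Finset.univ.filter (fun i => φ i = f), (φ i).val h := by
        rw [Finset.sum_fiberwise_of_maps_to (fun i _ => Finset.mem_univ (φ i))]
    _ = ∑ f : S, f.val 1 * f.val h := by
        refine Finset.sum_congr rfl fun f _ => ?_
        rw [Finset.sum_congr rfl (fun i hi => by
          rw [(Finset.mem_filter.mp hi).2]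
          )]
        rw [Finset.sum_const, nsmul_eq_mul, hfiber f]

lemma main_count (a : G) :
    (Nat.card {p : G × G // a = p.1⁻¹ * p.2⁻¹ * p.1 * p.2} : ℂ) =
      (Fintype.card G : ℂ) * ∑ f : {f : G → ℂ // IsIrrChar G f}, f.val a⁻¹ / f.val 1 := by
  set n : ℂ := (Fintype.card G : ℂ) with hn
  set S := {f : G → ℂ // IsIrrChar G f}
  have hiff : ∀ x y : G, (a = x⁻¹ * y⁻¹ * x * y) ↔ (y⁻¹ * x * y * (a⁻¹ * x⁻¹) = 1) := by
    intro x y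
    rw [mul_eq_one_iff_eq_inv, mul_inv_rev, inv_inv]
    constructor
    · rintro rfl; group
    · intro hyp
      have h2 : a = x⁻¹ * (y⁻¹ * x * y) := by rw [hyp]; group
      exact h2.trans (by group)
  have h0 : (Nat.card {p : G × G // a = p.1⁻¹ * p.2⁻¹ * p.1 * p.2} : ℂ) =
      ∑ x : G, ∑ y : G, (if y⁻¹ * x * y * (a⁻¹ * x⁻¹) = 1 then (1:ℂ) else 0) := by
    rw [Nat.card_eq_fintype_card, Fintype.card_subtype, Finset.card_filter]
    push_cast
    rw [Fintype.sum_prod_type]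
    refine Finset.sum_congr rfl fun x _ => Finset.sum_congr rfl fun y _ => ?_
    by_cases hc : a = x⁻¹ * y⁻¹ * x * y
    · rw [if_pos hc, if_pos ((hiff x y).mp hc)]
    · rw [if_neg hc, if_neg (fun hcc => hc ((hiff x y).mpr hcc))]
  have hperf : ∀ f : S, ∑ x : G, ∑ y : G,
      f.val 1 * f.val (y⁻¹ * x * y * (a⁻¹ * x⁻¹)) = n * (n * f.val a⁻¹ / f.val 1) := by
    intro f
    obtain ⟨V, hsV, hfc⟩ := f.2
    haveI := hsV
    rw [hfc]
    have hx : ∀ x : G, ∑ y : G, V.character 1 * V.character (y⁻¹ * x * y * (a⁻¹ * x⁻¹)) =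
        n * (V.character x * V.character (a⁻¹ * x⁻¹)) := by
      intro x
      rw [← Finset.mul_sum, sum_conj_char V x (a⁻¹ * x⁻¹)]
      have h1 := char_one_ne_zero V
      rw [mul_comm, div_mul_cancel₀ _ h1]
      ring
    rw [Finset.sum_congr rfl fun x _ => hx x, ← Finset.mul_sum]
    have hflip : ∀ x : G, V.character (a⁻¹ * x⁻¹) = V.character (x⁻¹ * a⁻¹) :=
      fun x => FDRep.char_mul_comm V x⁻¹ a⁻¹
    rw [Finset.sum_congr rfl fun x _ => by rw [hflip x]]
    rw [sum_conv_char V a⁻¹]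
  have h1 : ∑ x : G, ∑ y : G, (if y⁻¹ * x * y * (a⁻¹ * x⁻¹) = 1 then n else 0) =
      n * (n * ∑ f : S, f.val a⁻¹ / f.val 1) := by
    have hA : ∀ x y : G, (if y⁻¹ * x * y * (a⁻¹ * x⁻¹) = 1 then n else 0) =
        ∑ f : S, f.val 1 * f.val (y⁻¹ * x * y * (a⁻¹ * x⁻¹)) :=
      fun x y => reg_char_eq _
    rw [Finset.sum_congr rfl fun x _ => Finset.sum_congr rfl fun y _ => hA x y]
    rw [Finset.sum_congr rfl fun x _ => Finset.sum_comm, Finset.sum_comm]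
    rw [Finset.sum_congr rfl fun f _ => hperf f]
    rw [← Finset.mul_sum]
    congr 1
    rw [Finset.mul_sum]
    exact Finset.sum_congr rfl fun f _ => (mul_div_assoc _ _ _)
  apply mul_left_cancel₀ (cardC_ne_zero (G := G))
  have hmul : ∀ x : G, n * (∑ y : G, if y⁻¹ * x * y * (a⁻¹ * x⁻¹) = 1 then (1:ℂ) else 0) =
      ∑ y : G, (if y⁻¹ * x * y * (a⁻¹ * x⁻¹) = 1 then n else 0) := by
    intro x
    rw [Finset.mul_sum]
    exact Finset.sum_congr rfl fun y _ => by rw [mul_ite, mul_one, mul_zero]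
  rw [h0, Finset.mul_sum, Finset.sum_congr rfl fun x _ => hmul x, h1]


end FrobeniusCommutatorAux

/-- The number of ordered pairs `(x, y)` with `[x,y] = x⁻¹y⁻¹xy = g` equals `|G|` times the
sum of `χ(g)/χ(1)` over all irreducible complex characters `χ` of `G`. -/
theorem card_commutator_pairs_eq_card_mul_sum_char_div_degree
    {G : Type} [Group G] [Finite G] (g : G) :
    (Nat.card {p : G × G // g = p.1⁻¹ * p.2⁻¹ * p.1 * p.2} : ℂ) =
      (Nat.card G : ℂ) * ∑ᶠ χ : {f : G → ℂ // IsIrrChar G f}, χ.val g / χ.val 1 := by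
  letI : Fintype G := Fintype.ofFinite G
  rw [finsum_eq_sum_of_fintype]
  have hswap : Nat.card {p : G × G // g = p.1⁻¹ * p.2⁻¹ * p.1 * p.2} =
      Nat.card {p : G × G // g⁻¹ = p.1⁻¹ * p.2⁻¹ * p.1 * p.2} := by
    refine Nat.card_congr ⟨fun p => ⟨(p.1.2, p.1.1), ?_⟩, fun q => ⟨(q.1.2, q.1.1), ?_⟩, ?_, ?_⟩
    · obtain ⟨⟨x, y⟩, hp⟩ := p
      show g⁻¹ = y⁻¹ * x⁻¹ * y * x
      rw [hp]; group
    · obtain ⟨⟨x, y⟩, hq⟩ := q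
      show g = y⁻¹ * x⁻¹ * y * x
      rw [← inv_inv g, hq]; group
    · intro p; rfl
    · intro q; rfl
  rw [hswap, FrobeniusCommutatorAux.main_count g⁻¹, Nat.card_eq_fintype_card]
  simp only [inv_inv]
end

section
/- If two finite groups G and H are equitabular, then the index in G of the subgroup generated by all squares {x² : x ∈ G} equals the index in H of the subgroup generated by all squares {x² : x ∈ H}. That is, the character table determines the subgroup generated by the word w = x². -/
open CategoryTheory

namespace EquitabularAux

variable {G : Type} [Group G]

lemma trace_mul_of_finrank_one {V : Type} [AddCommGroup V] [Module ℂ V]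
    [FiniteDimensional ℂ V] (hV : Module.finrank ℂ V = 1) (u v : V →ₗ[ℂ] V) :
    LinearMap.trace ℂ V (u * v) = LinearMap.trace ℂ V u * LinearMap.trace ℂ V v := by
  let b : Module.Basis (Fin 1) ℂ V := Module.finBasisOfFinrankEq ℂ V hV
  rw [LinearMap.trace_eq_matrix_trace ℂ b, LinearMap.trace_eq_matrix_trace ℂ b,
    LinearMap.trace_eq_matrix_trace ℂ b]
  rw [show (u * v) = u ∘ₗ v from rfl, LinearMap.toMatrix_comp b b b]
  simp [Matrix.trace, Matrix.mul_apply, Fin.sum_univ_one]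

noncomputable def signRep (φ : G →* ℂ) : Representation ℂ G ℂ where
  toFun g := φ g • LinearMap.id
  map_one' := by ext; simp
  map_mul' g h := by ext; simp [mul_smul]; ring

noncomputable def signFDRep (φ : G →* ℂ) : FDRep ℂ G := FDRep.of (signRep φ)

lemma finrank_signFDRep (φ : G →* ℂ) : Module.finrank ℂ (signFDRep φ) = 1 :=
  Module.finrank_self ℂ

lemma char_signFDRep (φ : G →* ℂ) (g : G) : (signFDRep φ).character g = φ g := by
  simp only [FDRep.character]
  have h1 : ((signFDRep φ).ρ g) = φ g • LinearMap.id := rfl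
  rw [h1, map_smul]
  have h2 : (LinearMap.trace ℂ (signFDRep φ)) LinearMap.id = 1 := by
    rw [LinearMap.trace_id]
    have : Module.finrank ℂ (signFDRep φ) = 1 := Module.finrank_self ℂ
    rw [this]; norm_num
  rw [h2]; simp

lemma simple_of_finrank_one (X : FDRep ℂ G) (hX : Module.finrank ℂ X = 1) : Simple X := by
  have hX' : Module.finrank ℂ X.V = 1 := hX
  constructor
  intro Y f m
  constructor
  · intro hiso h0
    have hid : inv f ≫ f = 𝟙 X := IsIso.inv_hom_id f
    have hcomp := congrArg Action.Hom.hom hid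
    rw [Action.comp_hom, Action.id_hom] at hcomp
    have hf0 : f.hom = 0 := by rw [h0]; rfl
    rw [hf0, Limits.comp_zero] at hcomp
    have h3 : ∀ a : X.V, a = 0 := fun a => by
      have := congrArg (fun h : X.V ⟶ X.V => h a) hcomp.symm
      exact this
    have : Subsingleton X.V := ⟨fun a b => by rw [h3 a, h3 b]⟩
    rw [Module.finrank_zero_of_subsingleton] at hX'
    exact one_ne_zero hX'.symm
  · intro hne
    have hm : Mono f.hom := (Action.forget _ _).map_mono f
    have hinj : Function.Injective f.hom := by
      have := (forget₂ (FGModuleCat ℂ) (ModuleCat ℂ)).map_mono f.hom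
      exact (ModuleCat.mono_iff_injective _).1 this
    have hh : f.hom.hom.hom ≠ 0 := by
      intro h0
      apply hne
      ext : 1
      exact FGModuleCat.hom_ext h0
    have hsurj : Function.Surjective f.hom := by
      rw [← LinearMap.range_eq_top]
      apply Submodule.eq_top_of_finrank_eq
      rw [hX']
      have hle : Module.finrank ℂ (LinearMap.range f.hom.hom.hom) ≤ 1 :=
        hX' ▸ Submodule.finrank_le _
      have hbot : LinearMap.range f.hom.hom.hom ≠ ⊥ :=
        fun h0 => hh (LinearMap.range_eq_bot.mp h0)
      have hpos : Module.finrank ℂ (LinearMap.range f.hom.hom.hom) ≠ 0 := by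
        rwa [Ne, Submodule.finrank_eq_zero]
      change Module.finrank ℂ (LinearMap.range f.hom.hom.hom) = 1
      omega
    have : IsIso ((forget₂ (FGModuleCat ℂ) (ModuleCat ℂ)).map f.hom) :=
      (ConcreteCategory.isIso_iff_bijective _).2 ⟨hinj, hsurj⟩
    have : IsIso f.hom := isIso_of_reflects_iso f.hom (forget₂ (FGModuleCat ℂ) (ModuleCat ℂ))
    exact Action.isIso_of_hom_isIso f

lemma isIrrChar_of_hom (φ : G →* ℂ) : IsIrrChar G φ :=
  ⟨signFDRep φ, simple_of_finrank_one _ (finrank_signFDRep φ),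
    funext fun g => (char_signFDRep φ g).symm⟩

lemma finrank_eq_one_of_signs {f : G → ℂ} (V : FDRep ℂ G) (hf : f = V.character)
    (hs : ∀ g, f g = 1 ∨ f g = -1) : Module.finrank ℂ V = 1 := by
  have h1 : f 1 = Module.finrank ℂ V := by rw [hf]; exact FDRep.char_one V
  rcases hs 1 with h | h
  · rw [h] at h1
    exact_mod_cast h1.symm
  · rw [h] at h1
    exfalso
    have : ((Module.finrank ℂ V + 1 : ℕ) : ℂ) = 0 := by push_cast; rw [← h1]; ring
    have := Nat.cast_eq_zero.mp this
    omega

lemma map_one_of_signs {f : G → ℂ} (hi : IsIrrChar G f)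
    (hs : ∀ g, f g = 1 ∨ f g = -1) : f 1 = 1 := by
  obtain ⟨V, _, hf⟩ := hi
  have := finrank_eq_one_of_signs V hf hs
  rw [hf, FDRep.char_one, this]
  norm_num

lemma map_mul_of_signs {f : G → ℂ} (hi : IsIrrChar G f)
    (hs : ∀ g, f g = 1 ∨ f g = -1) (g h : G) : f (g * h) = f g * f h := by
  obtain ⟨V, _, hf⟩ := hi
  have hr : Module.finrank ℂ V.V = 1 := finrank_eq_one_of_signs V hf hs
  rw [hf]
  simp only [FDRep.character]
  rw [map_mul]
  exact trace_mul_of_finrank_one hr _ _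

/-- Irreducible ±1-valued characters are the same as ±1-valued monoid homs to ℂ. -/
noncomputable def signCharEquivSignHom (G : Type) [Group G] :
    {f : G → ℂ // IsIrrChar G f ∧ ∀ g, f g = 1 ∨ f g = -1} ≃
      {φ : G →* ℂ // ∀ g, φ g = 1 ∨ φ g = -1} where
  toFun χ := ⟨{ toFun := χ.1, map_one' := map_one_of_signs χ.2.1 χ.2.2,
                map_mul' := map_mul_of_signs χ.2.1 χ.2.2 }, χ.2.2⟩
  invFun φ := ⟨φ.1, isIrrChar_of_hom φ.1, φ.2⟩
  left_inv χ := Subtype.ext rfl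
  right_inv φ := Subtype.ext (MonoidHom.ext fun g => rfl)

/-- The ±1-valued monoid homs to ℂ are the same as homs to `Multiplicative (ZMod 2)`. -/
noncomputable def signHomEquivZMod (G : Type) [Group G] :
    {φ : G →* ℂ // ∀ g, φ g = 1 ∨ φ g = -1} ≃ (G →* Multiplicative (ZMod 2)) where
  toFun φ :=
    { toFun := fun g => Multiplicative.ofAdd (if φ.1 g = 1 then 0 else 1)
      map_one' := by simp
      map_mul' := fun g h => by
        have hmul : φ.1 (g * h) = φ.1 g * φ.1 h := map_mul φ.1 g h
        show Multiplicative.ofAdd _ = Multiplicative.ofAdd _ * Multiplicative.ofAdd _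
        rw [← ofAdd_add]
        apply congrArg
        rcases φ.2 g with hg | hg <;> rcases φ.2 h with hh | hh
        · rw [if_pos (show φ.1 (g * h) = 1 by rw [hmul, hg, hh]; norm_num),
            if_pos hg, if_pos hh]
          decide
        · rw [if_neg (show ¬ φ.1 (g * h) = 1 by rw [hmul, hg, hh]; norm_num),
            if_pos hg, if_neg (show ¬ φ.1 h = 1 by rw [hh]; norm_num)]
          decide
        · rw [if_neg (show ¬ φ.1 (g * h) = 1 by rw [hmul, hg, hh]; norm_num),
            if_neg (show ¬ φ.1 g = 1 by rw [hg]; norm_num), if_pos hh]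
          decide
        · rw [if_pos (show φ.1 (g * h) = 1 by rw [hmul, hg, hh]; norm_num),
            if_neg (show ¬ φ.1 g = 1 by rw [hg]; norm_num),
            if_neg (show ¬ φ.1 h = 1 by rw [hh]; norm_num)]
          decide }
  invFun ψ :=
    ⟨{ toFun := fun g => if (ψ g).toAdd = 0 then (1 : ℂ) else -1
       map_one' := by simp
       map_mul' := fun g h => by
         have hadd : (ψ (g * h)).toAdd = (ψ g).toAdd + (ψ h).toAdd := by
           rw [map_mul ψ g h]; rfl
         have key : ∀ a : ZMod 2, a = 0 ∨ a = 1 := by decide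
         show (if (ψ (g * h)).toAdd = 0 then (1 : ℂ) else -1)
           = (if (ψ g).toAdd = 0 then (1 : ℂ) else -1) * (if (ψ h).toAdd = 0 then (1 : ℂ) else -1)
         rcases key (ψ g).toAdd with hg | hg <;> rcases key (ψ h).toAdd with hh | hh
         · rw [if_pos (show (ψ (g * h)).toAdd = 0 by rw [hadd, hg, hh]; decide),
             if_pos hg, if_pos hh]
           norm_num
         · rw [if_neg (show ¬ (ψ (g * h)).toAdd = 0 by rw [hadd, hg, hh]; decide),
             if_pos hg, if_neg (show ¬ (ψ h).toAdd = 0 by rw [hh]; decide)]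
           norm_num
         · rw [if_neg (show ¬ (ψ (g * h)).toAdd = 0 by rw [hadd, hg, hh]; decide),
             if_neg (show ¬ (ψ g).toAdd = 0 by rw [hg]; decide), if_pos hh]
           norm_num
         · rw [if_pos (show (ψ (g * h)).toAdd = 0 by rw [hadd, hg, hh]; decide),
             if_neg (show ¬ (ψ g).toAdd = 0 by rw [hg]; decide),
             if_neg (show ¬ (ψ h).toAdd = 0 by rw [hh]; decide)]
           norm_num },
     fun g => by
       by_cases h : (ψ g).toAdd = 0
       · exact Or.inl (if_pos h)
       · exact Or.inr (if_neg h)⟩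
  left_inv φ := by
    apply Subtype.ext
    apply MonoidHom.ext
    intro g
    show (if (Multiplicative.ofAdd (if φ.1 g = 1 then (0 : ZMod 2) else 1)).toAdd = 0
      then (1 : ℂ) else -1) = φ.1 g
    rw [toAdd_ofAdd]
    rcases φ.2 g with hg | hg
    · rw [if_pos hg, if_pos rfl, hg]
    · rw [if_neg (show ¬ φ.1 g = 1 by rw [hg]; norm_num),
        if_neg (by decide : ¬ (1 : ZMod 2) = 0), hg]
  right_inv ψ := by
    apply MonoidHom.ext
    intro g
    show Multiplicative.ofAdd
      (if (if (ψ g).toAdd = 0 then (1 : ℂ) else -1) = 1 then (0 : ZMod 2) else 1) = ψ g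
    have key : ∀ a : ZMod 2, a = 0 ∨ a = 1 := by decide
    apply Multiplicative.toAdd.injective
    rw [toAdd_ofAdd]
    rcases key (ψ g).toAdd with hg | hg
    · rw [if_pos hg, if_pos rfl, hg]
    · rw [if_neg (show ¬ (ψ g).toAdd = 0 by rw [hg]; decide),
        if_neg (by norm_num : ¬ (-1 : ℂ) = 1), hg]

variable (G) in
/-- The subgroup generated by the squares. -/
noncomputable def sqSub : Subgroup G := Subgroup.closure {g : G | ∃ x : G, x ^ 2 = g}

instance : (sqSub G).Normal := by
  constructor
  intro n hn c
  have h1 : ((MulAut.conj c : G →* G) '' {g : G | ∃ x : G, x ^ 2 = g})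
      = {g : G | ∃ x : G, x ^ 2 = g} := by
    ext y
    constructor
    · rintro ⟨s, ⟨x, rfl⟩, rfl⟩
      exact ⟨c * x * c⁻¹, by simp [MulAut.conj_apply, pow_two]⟩
    · rintro ⟨x, rfl⟩
      exact ⟨(c⁻¹ * x * c) ^ 2, ⟨c⁻¹ * x * c, rfl⟩, by
        simp [MulAut.conj_apply, pow_two]; group⟩
  have h2 := Subgroup.mem_map_of_mem (MulAut.conj c : G →* G) hn
  rw [show sqSub G = Subgroup.closure {g : G | ∃ x : G, x ^ 2 = g} from rfl,
    MonoidHom.map_closure, h1] at h2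
  exact h2

lemma sq_mem_sqSub (x : G) : x ^ 2 ∈ sqSub G :=
  Subgroup.subset_closure ⟨x, rfl⟩

lemma quot_sq_eq_one (q : G ⧸ sqSub G) : q * q = 1 := by
  induction q using QuotientGroup.induction_on with
  | H x =>
    rw [← QuotientGroup.mk_mul, ← pow_two]
    exact (QuotientGroup.eq_one_iff _).2 (sq_mem_sqSub x)

noncomputable instance : CommGroup (G ⧸ sqSub G) :=
  { (inferInstance : Group (G ⧸ sqSub G)) with
    mul_comm := fun a b => by
      have hinv : ∀ q : G ⧸ sqSub G, q⁻¹ = q := fun q =>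
        inv_eq_of_mul_eq_one_right (quot_sq_eq_one q)
      calc a * b = (a * b)⁻¹ := (hinv (a * b)).symm
        _ = b⁻¹ * a⁻¹ := mul_inv_rev a b
        _ = b * a := by rw [hinv, hinv] }

/-- Homs to `Multiplicative (ZMod 2)` factor through the quotient by squares. -/
noncomputable def homEquivQuot (G : Type) [Group G] :
    (G →* Multiplicative (ZMod 2)) ≃ (G ⧸ sqSub G →* Multiplicative (ZMod 2)) where
  toFun φ := QuotientGroup.lift (sqSub G) φ (by
    intro x hx
    refine Subgroup.closure_le (MonoidHom.ker φ) |>.2 ?_ hx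
    rintro y ⟨z, rfl⟩
    have : ∀ a : Multiplicative (ZMod 2), a ^ 2 = 1 := by decide
    simpa [MonoidHom.mem_ker] using this (φ z))
  invFun ψ := ψ.comp (QuotientGroup.mk' (sqSub G))
  left_inv φ := MonoidHom.ext fun g => rfl
  right_inv ψ := MonoidHom.ext fun q => by
    induction q using QuotientGroup.induction_on with
    | H x => rfl

lemma card_signchar_eq_index (G : Type) [Group G] [Finite G] :
    Nat.card {f : G → ℂ // IsIrrChar G f ∧ ∀ g, f g = 1 ∨ f g = -1}
      = (Subgroup.closure {g : G | ∃ x : G, x ^ 2 = g}).index := by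
  classical
  haveI : Fact (Nat.Prime 2) := ⟨by norm_num⟩
  set Q := G ⧸ sqSub G with hQ
  letI : Module (ZMod 2) (Additive Q) := AddCommGroup.zmodModule (by
    intro x
    show (2 : ℕ) • x = 0
    have : x.toMul * x.toMul = 1 := quot_sq_eq_one _
    rw [two_nsmul]
    apply Additive.toMul.injective
    simpa using this)
  -- chain of equivalences
  have e1 := signCharEquivSignHom G
  have e2 := signHomEquivZMod G
  have e3 := homEquivQuot G
  have e4 : (Q →* Multiplicative (ZMod 2)) ≃ (Additive Q →+ ZMod 2) :=
    MonoidHom.toAdditiveLeft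
  have e5 : (Additive Q →+ ZMod 2) ≃ (Additive Q →ₗ[ZMod 2] ZMod 2) :=
    { toFun := fun f =>
        { toAddHom := ⟨f, f.map_add⟩
          map_smul' := fun c x => ZMod.map_smul f c x }
      invFun := fun g => g.toAddMonoidHom
      left_inv := fun f => rfl
      right_inv := fun g => rfl }
  have hcard : Nat.card {f : G → ℂ // IsIrrChar G f ∧ ∀ g, f g = 1 ∨ f g = -1}
      = Nat.card (Additive Q →ₗ[ZMod 2] ZMod 2) :=
    Nat.card_congr ((((e1.trans e2).trans e3).trans e4).trans e5)
  rw [hcard]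
  -- dual space cardinality
  haveI : Finite Q := Quotient.finite _
  haveI : Finite (Additive Q) := ‹Finite Q›
  haveI : Module.Finite (ZMod 2) (Additive Q) := Module.Finite.of_finite
  haveI : Finite (Additive Q →ₗ[ZMod 2] ZMod 2) :=
    Finite.of_injective (fun f => (f : Additive Q → ZMod 2))
      (fun a b h => LinearMap.ext fun x => congrFun h x)
  have hdual : Module.finrank (ZMod 2) (Module.Dual (ZMod 2) (Additive Q))
      = Module.finrank (ZMod 2) (Additive Q) := Subspace.dual_finrank_eq
  haveI : Fintype (Additive Q) := Fintype.ofFinite _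
  haveI : Fintype (Module.Dual (ZMod 2) (Additive Q)) := Fintype.ofFinite _
  have hc1 : Fintype.card (Module.Dual (ZMod 2) (Additive Q))
      = Fintype.card (ZMod 2) ^ Module.finrank (ZMod 2) (Module.Dual (ZMod 2) (Additive Q)) :=
    Module.card_eq_pow_finrank
  have hc2 : Fintype.card (Additive Q)
      = Fintype.card (ZMod 2) ^ Module.finrank (ZMod 2) (Additive Q) :=
    Module.card_eq_pow_finrank
  have : Nat.card (Additive Q →ₗ[ZMod 2] ZMod 2) = Nat.card Q := by
    rw [Nat.card_eq_fintype_card (α := Additive Q →ₗ[ZMod 2] ZMod 2)]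
    rw [show Nat.card Q = Nat.card (Additive Q) from Nat.card_congr Additive.ofMul]
    rw [Nat.card_eq_fintype_card (α := Additive Q)]
    rw [show Fintype.card (Additive Q →ₗ[ZMod 2] ZMod 2)
        = Fintype.card (Module.Dual (ZMod 2) (Additive Q)) from rfl]
    rw [hc1, hc2, hdual]
  rw [this]
  rfl

end EquitabularAux

/-- For equitabular finite groups, the subgroup generated by all squares has the same index
in both groups: the character table determines the subgroup generated by the word `x²`. -/
theorem equitabular_index_closure_squares_eq
    {G H : Type} [Group G] [Group H] [Finite G] [Finite H]
    (heq : Equitabular G H) :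
    (Subgroup.closure {g : G | ∃ x : G, x ^ 2 = g}).index =
      (Subgroup.closure {h : H | ∃ x : H, x ^ 2 = h}).index := by
  obtain ⟨Φ, Ψ, hc⟩ := heq
  rw [← EquitabularAux.card_signchar_eq_index G, ← EquitabularAux.card_signchar_eq_index H]
  apply Nat.card_congr
  have key : ∀ (χ : {f : G → ℂ // IsIrrChar G f}) (h : H),
      ∃ g : G, χ.val g = (Φ χ).val h := by
    intro χ h
    obtain ⟨g, hg⟩ := Quotient.exists_rep (Ψ.symm (ConjClasses.mk h))
    refine ⟨g, hc χ (Ψ.symm (ConjClasses.mk h)) g h ?_ ?_⟩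
    · exact ConjClasses.mem_carrier_iff_mk_eq.2 hg
    · rw [Equiv.apply_symm_apply]
      exact ConjClasses.mem_carrier_mk
  have key2 : ∀ (χ : {f : G → ℂ // IsIrrChar G f}) (g : G),
      ∃ h : H, χ.val g = (Φ χ).val h := by
    intro χ g
    obtain ⟨h, hh⟩ := Quotient.exists_rep (Ψ (ConjClasses.mk g))
    refine ⟨h, hc χ (ConjClasses.mk g) g h ConjClasses.mem_carrier_mk ?_⟩
    exact ConjClasses.mem_carrier_iff_mk_eq.2 hh
  refine
    { toFun := fun χ => ⟨(Φ ⟨χ.1, χ.2.1⟩).1, (Φ ⟨χ.1, χ.2.1⟩).2, ?_⟩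
      invFun := fun χ' => ⟨(Φ.symm ⟨χ'.1, χ'.2.1⟩).1, (Φ.symm ⟨χ'.1, χ'.2.1⟩).2, ?_⟩
      left_inv := ?_
      right_inv := ?_ }
  · intro h
    obtain ⟨g, hg⟩ := key ⟨χ.1, χ.2.1⟩ h
    rw [← hg]
    exact χ.2.2 g
  · intro g
    obtain ⟨h, hh⟩ := key2 (Φ.symm ⟨χ'.1, χ'.2.1⟩) g
    rw [hh]
    have : Φ (Φ.symm ⟨χ'.1, χ'.2.1⟩) = ⟨χ'.1, χ'.2.1⟩ := Φ.apply_symm_apply _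
    rw [this]
    exact χ'.2.2 h
  · intro χ
    apply Subtype.ext
    show (Φ.symm ⟨(Φ ⟨χ.1, χ.2.1⟩).1, (Φ ⟨χ.1, χ.2.1⟩).2⟩).1 = χ.1
    have : (⟨(Φ ⟨χ.1, χ.2.1⟩).1, (Φ ⟨χ.1, χ.2.1⟩).2⟩ : {f : H → ℂ // IsIrrChar H f})
        = Φ ⟨χ.1, χ.2.1⟩ := rfl
    rw [this, Φ.symm_apply_apply]
  · intro χ'
    apply Subtype.ext
    show (Φ ⟨(Φ.symm ⟨χ'.1, χ'.2.1⟩).1, (Φ.symm ⟨χ'.1, χ'.2.1⟩).2⟩).1 = χ'.1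
    have : (⟨(Φ.symm ⟨χ'.1, χ'.2.1⟩).1, (Φ.symm ⟨χ'.1, χ'.2.1⟩).2⟩ : {f : G → ℂ // IsIrrChar G f})
        = Φ.symm ⟨χ'.1, χ'.2.1⟩ := rfl
    rw [this, Φ.apply_symm_apply]
end

section
/- Let n be a positive integer and let A, B : Fin n × Fin n → ℂ be two n-by-n complex matrices. Associate to A the vertex-colored graph 𝒢(A) with vertex set {r_1,…,r_n} ∪ {c_1,…,c_n} ∪ {e_{i,j} : 1 ≤ i,j ≤ n} ∪ {v : v is a value occurring in A}, where all r-vertices share one color, all c-vertices share a second color, all e-vertices share a third color, and each value vertex v is colored by the complex number v itself; the edges are {r_i, e_{i,j}} and {c_j, e_{i,j}} for all i, j, and {v, e_{i,j}} whenever A(i,j) = v. Then there exist permutations σ, τ of Fin n with B(i,j) = A(σ(i), τ(j)) for all i, j if and only if there exists a color-preserving graph isomorphism from 𝒢(A) to 𝒢(B). -/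
/-- Vertex set of the graph associated to an `n × n` complex matrix `A`: row vertices,
column vertices, entry vertices, and one value vertex for each complex number occurring
as an entry of `A`. -/
def CTVert (n : ℕ) (A : Fin n × Fin n → ℂ) : Type :=
  (Fin n ⊕ Fin n) ⊕ ((Fin n × Fin n) ⊕ {z : ℂ // ∃ p, A p = z})

/-- The base (directed) edge relation: row vertex `r i` is joined to every entry vertex
`e (i, j)`, column vertex `c j` is joined to every entry vertex `e (i, j)`, and a value
vertex `v` is joined to the entry vertex `e (i, j)` exactly when `A (i, j) = v`. -/
def ctRel (n : ℕ) (A : Fin n × Fin n → ℂ) : CTVert n A → CTVert n A → Prop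
  | .inl (.inl i), .inr (.inl p) => p.1 = i
  | .inl (.inr j), .inr (.inl p) => p.2 = j
  | .inr (.inr v), .inr (.inl p) => A p = v.val
  | _, _ => False

/-- The (simple) graph associated to `A`, obtained by symmetrizing `ctRel`. -/
def ctGraph (n : ℕ) (A : Fin n × Fin n → ℂ) : SimpleGraph (CTVert n A) :=
  SimpleGraph.fromRel (ctRel n A)

/-- Vertex coloring: the row vertices share one color, the column vertices a second color,
the entry vertices a third color, and each value vertex is colored by its complex value. -/
def ctColor (n : ℕ) (A : Fin n × Fin n → ℂ) : CTVert n A → Fin 3 ⊕ ℂ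
  | .inl (.inl _) => .inl 0
  | .inl (.inr _) => .inl 1
  | .inr (.inl _) => .inl 2
  | .inr (.inr v) => .inr v.val

def fwdEquiv (n : ℕ) (A B : Fin n × Fin n → ℂ) (σ τ : Equiv.Perm (Fin n))
    (h : ∀ i j, B (i, j) = A (σ i, τ j)) : CTVert n A ≃ CTVert n B where
  toFun x := match x with
    | .inl (.inl i) => .inl (.inl (σ.symm i))
    | .inl (.inr j) => .inl (.inr (τ.symm j))
    | .inr (.inl p) => .inr (.inl (σ.symm p.1, τ.symm p.2))
    | .inr (.inr v) => .inr (.inr ⟨v.1, by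
        obtain ⟨p, hp⟩ := v.2
        exact ⟨(σ.symm p.1, τ.symm p.2), by rw [h]; simpa using hp⟩⟩)
  invFun x := match x with
    | .inl (.inl i) => .inl (.inl (σ i))
    | .inl (.inr j) => .inl (.inr (τ j))
    | .inr (.inl p) => .inr (.inl (σ p.1, τ p.2))
    | .inr (.inr v) => .inr (.inr ⟨v.1, by
        obtain ⟨p, hp⟩ := v.2
        refine ⟨(σ p.1, τ p.2), ?_⟩
        rw [← h]; simpa using hp⟩)
  left_inv x := by rcases x with (i|j)|(p|v) <;> simp <;> rfl
  right_inv x := by rcases x with (i|j)|(p|v) <;> simp <;> rfl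

/-- Two `n × n` complex matrices `A` and `B` (with `n ≥ 1`) agree up to a permutation of rows
and a permutation of columns if and only if there is a color-preserving isomorphism between
their associated vertex-colored graphs. -/
theorem perm_equiv_iff_colored_graph_iso (n : ℕ) (hn : 0 < n)
    (A B : Fin n × Fin n → ℂ) :
    (∃ σ τ : Equiv.Perm (Fin n), ∀ i j : Fin n, B (i, j) = A (σ i, τ j)) ↔
      ∃ φ : ctGraph n A ≃g ctGraph n B,
        ∀ x : CTVert n A, ctColor n B (φ x) = ctColor n A x := by
  constructor
  · rintro ⟨σ, τ, h⟩
    refine ⟨⟨fwdEquiv n A B σ τ h, ?_⟩, ?_⟩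
    · intro x y
      simp only [ctGraph, SimpleGraph.fromRel_adj]
      constructor
      · rintro ⟨hne, hr⟩
        refine ⟨fun e => hne (congrArg _ e), ?_⟩
        rcases x with (i|j)|(p|v) <;> rcases y with (i'|j')|(p'|v') <;>
          simp_all [ctRel, fwdEquiv, h]
      · rintro ⟨hne, hr⟩
        refine ⟨(fwdEquiv n A B σ τ h).injective.ne hne, ?_⟩
        rcases x with (i|j)|(p|v) <;> rcases y with (i'|j')|(p'|v') <;>
          simp_all [ctRel, fwdEquiv, h]
    · rintro ((i|j)|(p|v)) <;> rfl
  · rintro ⟨φ, hφ⟩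
    classical
    have hrow : ∀ i : Fin n, ∃ i', φ (.inl (.inl i)) = .inl (.inl i') := by
      intro i
      have hc := hφ (.inl (.inl i))
      rcases hx : φ (.inl (.inl i)) with (a|b)|(q|w) <;> rw [hx] at hc <;>
        first
        | exact ⟨_, rfl⟩
        | simp [ctColor] at hc
    have hcol : ∀ j : Fin n, ∃ j', φ (.inl (.inr j)) = .inl (.inr j') := by
      intro j
      have hc := hφ (.inl (.inr j))
      rcases hx : φ (.inl (.inr j)) with (a|b)|(q|w) <;> rw [hx] at hc <;>
        first
        | exact ⟨_, rfl⟩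
        | simp [ctColor] at hc
    have hent : ∀ p : Fin n × Fin n, ∃ q, φ (.inr (.inl p)) = .inr (.inl q) := by
      intro p
      have hc := hφ (.inr (.inl p))
      rcases hx : φ (.inr (.inl p)) with (a|b)|(q|w) <;> rw [hx] at hc <;>
        first
        | exact ⟨_, rfl⟩
        | simp [ctColor] at hc
    have hvalv : ∀ v : {z : ℂ // ∃ p, A p = z}, ∃ w : {z : ℂ // ∃ p, B p = z},
        φ (.inr (.inr v)) = .inr (.inr w) ∧ w.1 = v.1 := by
      intro v
      have hc := hφ (.inr (.inr v))
      rcases hx : φ (.inr (.inr v)) with (a|b)|(q|w) <;> rw [hx] at hc <;>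
        simp [ctColor] at hc <;>
        exact ⟨w, rfl, hc⟩
    set f : Fin n → Fin n := fun i => (hrow i).choose with hf
    set g : Fin n → Fin n := fun j => (hcol j).choose with hg
    set E : Fin n × Fin n → Fin n × Fin n := fun p => (hent p).choose with hE
    have hfs : ∀ i, φ (.inl (.inl i)) = .inl (.inl (f i)) := fun i => (hrow i).choose_spec
    have hgs : ∀ j, φ (.inl (.inr j)) = .inl (.inr (g j)) := fun j => (hcol j).choose_spec
    have hEs : ∀ p, φ (.inr (.inl p)) = .inr (.inl (E p)) := fun p => (hent p).choose_spec
    have finj : Function.Injective f := by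
      intro i i' hii
      have h2 : φ (.inl (.inl i)) = φ (.inl (.inl i')) := by rw [hfs, hfs, hii]
      exact Sum.inl.inj (Sum.inl.inj (φ.injective h2))
    have ginj : Function.Injective g := by
      intro j j' hjj
      have h2 : φ (.inl (.inr j)) = φ (.inl (.inr j')) := by rw [hgs, hgs, hjj]
      exact Sum.inr.inj (Sum.inl.inj (φ.injective h2))
    -- entry adjacency facts
    have hE1 : ∀ p : Fin n × Fin n, (E p).1 = f p.1 := by
      intro p
      have adjA : (ctGraph n A).Adj (.inl (.inl p.1)) (.inr (.inl p)) := by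
        exact (SimpleGraph.fromRel_adj _ _ _).mpr ⟨fun hcc => (by cases hcc), Or.inl rfl⟩
      have adjB := φ.map_rel_iff.mpr adjA
      rw [hfs, hEs] at adjB
      exact Or.elim ((SimpleGraph.fromRel_adj _ _ _).mp adjB).2 id False.elim
    have hE2 : ∀ p : Fin n × Fin n, (E p).2 = g p.2 := by
      intro p
      have adjA : (ctGraph n A).Adj (.inl (.inr p.2)) (.inr (.inl p)) := by
        exact (SimpleGraph.fromRel_adj _ _ _).mpr ⟨fun hcc => (by cases hcc), Or.inl rfl⟩
      have adjB := φ.map_rel_iff.mpr adjA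
      rw [hgs, hEs] at adjB
      exact Or.elim ((SimpleGraph.fromRel_adj _ _ _).mp adjB).2 id False.elim
    have hBE : ∀ p : Fin n × Fin n, B (E p) = A p := by
      intro p
      obtain ⟨w, hw, hwv⟩ := hvalv ⟨A p, p, rfl⟩
      have adjA : (ctGraph n A).Adj (.inr (.inr ⟨A p, p, rfl⟩)) (.inr (.inl p)) := by
        refine (SimpleGraph.fromRel_adj _ _ _).mpr ⟨?_, Or.inl ?_⟩
        · intro hcc; cases hcc
        · show A p = _
          rfl
      have adjB := φ.map_rel_iff.mpr adjA
      rw [hw, hEs] at adjB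
      have := (SimpleGraph.fromRel_adj _ _ _).mp adjB
      rcases this.2 with h1 | h1
      · simpa [ctRel, hwv] using h1
      · simp [ctRel] at h1
    let σ' : Equiv.Perm (Fin n) := Equiv.ofBijective f (Finite.injective_iff_bijective.mp finj)
    let τ' : Equiv.Perm (Fin n) := Equiv.ofBijective g (Finite.injective_iff_bijective.mp ginj)
    refine ⟨σ'.symm, τ'.symm, fun i j => ?_⟩
    have key := hBE (σ'.symm i, τ'.symm j)
    have hEp : E (σ'.symm i, τ'.symm j) = (i, j) := by
      refine Prod.ext ?_ ?_
      · rw [hE1]; exact σ'.apply_symm_apply i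
      · rw [hE2]; exact τ'.apply_symm_apply j
    rw [hEp] at key
    exact key
end
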